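/- Let a, c, u ∈ ℂ with c not a nonpositive integer and u ≠ 1/2, and set δ := (1/2)(a − c + 1/2)(a − 1/2). Then for every complex x with |x| < 1: x(1−x)·∂ₓF(a+u, a−u; c; x) + ((1/2 − a)x + (1/2)c − 1/2 + (u − 1/2)(x − 1/2) + δ/(u − 1/2))·F(a+u, a−u; c; x) = ((a−u)(a−c+u)/(2(u − 1/2)))·F(a+u−1, a−u+1; c; x). -/

import Mathlib

/-!
After identifying `gauss2F1` with Mathlib's `₂F₁`, the identity is, up to the factor
`2 * (u - 1/2)`, the contiguous relation
`(a - b - 1) (x (1 - x) F' - b x F) = b (a - c) (F(a - 1, b + 1) - F)` with `a + u, a - u` in place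
of `a, b`, and `δ` is exactly what makes the remaining constant multiple of `F` match. The contiguous
relation is proved on the disc of convergence by comparing Taylor coefficients, each of which is an
explicit rational multiple of the `n`-th coefficient of `F`.
-/

/-- The Gauss hypergeometric series F(a,b;c;x) = ∑ (a)ₖ(b)ₖ/((c)ₖ k!) xᵏ. -/
noncomputable def gauss2F1 (a b c x : ℂ) : ℂ :=
  ∑' k : ℕ, ((ascPochhammer ℂ k).eval a * (ascPochhammer ℂ k).eval b)
    / ((ascPochhammer ℂ k).eval c * (Nat.factorial k : ℂ)) * x ^ k

open Polynomial

theorem ascPochhammer_succ_eval_left {S : Type*} [CommSemiring S] (n : ℕ) (x : S) :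
    (ascPochhammer S (n + 1)).eval x = x * (ascPochhammer S n).eval (x + 1) := by
  simp [ascPochhammer_succ_left, eval_comp]

section Field

variable {𝕂 : Type*} [Field 𝕂] [CharZero 𝕂]

theorem ordinaryHypergeometricCoefficient_succ (a b c : 𝕂) (n : ℕ) :
    ordinaryHypergeometricCoefficient a b c (n + 1) =
      ordinaryHypergeometricCoefficient a b c n * ((a + n) * (b + n) / ((c + n) * (n + 1))) := by
  simp only [ordinaryHypergeometricCoefficient, ascPochhammer_succ_eval, Nat.factorial_succ]
  push_cast
  rw [div_eq_mul_inv]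
  simp only [mul_inv]
  ring

theorem mul_ordinaryHypergeometricCoefficient_sub_one_add_one_succ (a b c : 𝕂) (n : ℕ) :
    b * ordinaryHypergeometricCoefficient (a - 1) (b + 1) c (n + 1) =
      ordinaryHypergeometricCoefficient a b c n *
        ((a - 1) * (b + n) * (b + n + 1) / ((c + n) * (n + 1))) := by
  have ha : (ascPochhammer 𝕂 (n + 1)).eval (a - 1) = (a - 1) * (ascPochhammer 𝕂 n).eval a := by
    rw [ascPochhammer_succ_eval_left, sub_add_cancel]
  have hb : b * (ascPochhammer 𝕂 (n + 1)).eval (b + 1) =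
      (ascPochhammer 𝕂 n).eval b * (b + n) * (b + n + 1) := by
    rw [← ascPochhammer_succ_eval_left, ascPochhammer_succ_eval, ascPochhammer_succ_eval]
    push_cast
    ring
  simp only [ordinaryHypergeometricCoefficient, ha, ascPochhammer_succ_eval n c,
    Nat.factorial_succ]
  push_cast
  rw [div_eq_mul_inv]
  simp only [mul_inv]
  linear_combination ((n : 𝕂) + 1)⁻¹ * (n.factorial : 𝕂)⁻¹ * (a - 1) *
    (ascPochhammer 𝕂 n).eval a * ((ascPochhammer 𝕂 n).eval c)⁻¹ * (c + n)⁻¹ * hb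

theorem ordinaryHypergeometricCoefficient_contiguous (a b : 𝕂) {c : 𝕂} (n : ℕ)
    (hc : c + n ≠ 0) :
    (a - b - 1) * ((n + 1) * ordinaryHypergeometricCoefficient a b c (n + 1)
        - (b + n) * ordinaryHypergeometricCoefficient a b c n) =
      b * (a - c) * (ordinaryHypergeometricCoefficient (a - 1) (b + 1) c (n + 1)
        - ordinaryHypergeometricCoefficient a b c (n + 1)) := by
  have hn : (n : 𝕂) + 1 ≠ 0 := by exact_mod_cast n.succ_ne_zero
  rw [mul_sub (b * (a - c)), mul_right_comm b,
    mul_ordinaryHypergeometricCoefficient_sub_one_add_one_succ,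
    ordinaryHypergeometricCoefficient_succ]
  field_simp
  ring

end Field

namespace FormalMultilinearSeries

variable {𝕜 F : Type*} [NontriviallyNormedField 𝕜] [NormedAddCommGroup F] [NormedSpace 𝕜 F]
  [CompleteSpace F]

theorem hasSum_coeff_smul (p : FormalMultilinearSeries 𝕜 𝕜 F) {x : 𝕜}
    (hx : ‖x‖ₑ < p.radius) : HasSum (fun n => x ^ n • p.coeff n) (p.sum x) := by
  simpa only [apply_eq_pow_smul_coeff] using p.hasSum (by simpa using hx)

theorem hasSum_deriv_sum (p : FormalMultilinearSeries 𝕜 𝕜 F) {x : 𝕜} (hx : ‖x‖ₑ < p.radius) :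
    HasSum (fun n => x ^ n • ((n + 1) • p.coeff (n + 1))) (deriv p.sum x) := by
  rw [(p.hasFDerivAt_sum hx).hasDerivAt.deriv]
  simpa using (p.derivSeries.hasSum_coeff_smul (hx.trans_le p.radius_le_radius_derivSeries)).mapL
    (ContinuousLinearMap.apply 𝕜 F (1 : 𝕜))

end FormalMultilinearSeries

section RCLike

theorem one_le_ordinaryHypergeometricSeries_radius {𝕂 : Type*} (𝔸 : Type*) [RCLike 𝕂]
    [NormedDivisionRing 𝔸] [NormedAlgebra 𝕂 𝔸] (a b : 𝕂) {c : 𝕂} (hc : ∀ n : ℕ, c ≠ -n) :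
    1 ≤ (ordinaryHypergeometricSeries 𝔸 a b c).radius := by
  by_cases ha : ∃ k : ℕ, a = -k
  · obtain ⟨k, rfl⟩ := ha
    simp [ordinaryHypergeometric_radius_top_of_neg_nat₁]
  by_cases hb : ∃ k : ℕ, b = -k
  · obtain ⟨k, rfl⟩ := hb
    simp [ordinaryHypergeometric_radius_top_of_neg_nat₂]
  push Not at ha hb
  have hne {z : 𝕂} (hz : ∀ n : ℕ, z ≠ -n) (n : ℕ) : (n : 𝕂) ≠ -z :=
    fun h => hz n (by simp [h])
  rw [ordinaryHypergeometricSeries_radius_eq_one 𝔸 a b c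
    fun n => ⟨hne ha n, hne hb n, hne hc n⟩]

variable {𝕂 : Type*} [RCLike 𝕂] {a b c : 𝕂}

theorem enorm_lt_ordinaryHypergeometricSeries_radius (hc : ∀ n : ℕ, c ≠ -n) {x : 𝕂}
    (hx : ‖x‖ < 1) : ‖x‖ₑ < (ordinaryHypergeometricSeries 𝕂 a b c).radius :=
  (show ‖x‖ₑ < 1 by rwa [← ofReal_norm, ENNReal.ofReal_lt_one]).trans_le
    (one_le_ordinaryHypergeometricSeries_radius 𝕂 a b hc)

theorem hasSum_ordinaryHypergeometric (hc : ∀ n : ℕ, c ≠ -n) {x : 𝕂} (hx : ‖x‖ < 1) :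
    HasSum (fun n => x ^ n * ordinaryHypergeometricCoefficient a b c n) (₂F₁ a b c x) := by
  have h := (ordinaryHypergeometricSeries 𝕂 a b c).hasSum_coeff_smul
    (enorm_lt_ordinaryHypergeometricSeries_radius hc hx)
  simp only [ordinaryHypergeometricSeries, FormalMultilinearSeries.coeff_ofScalars,
    smul_eq_mul] at h
  exact h

theorem hasSum_deriv_ordinaryHypergeometric (hc : ∀ n : ℕ, c ≠ -n) {x : 𝕂} (hx : ‖x‖ < 1) :
    HasSum (fun n => x ^ n * ((n + 1) * ordinaryHypergeometricCoefficient a b c (n + 1)))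
      (deriv (₂F₁ a b c) x) := by
  have h := (ordinaryHypergeometricSeries 𝕂 a b c).hasSum_deriv_sum
    (enorm_lt_ordinaryHypergeometricSeries_radius hc hx)
  simp only [ordinaryHypergeometricSeries, FormalMultilinearSeries.coeff_ofScalars, smul_eq_mul,
    nsmul_eq_mul, Nat.cast_succ] at h
  exact h

theorem ordinaryHypergeometric_contiguous (hc : ∀ n : ℕ, c ≠ -n) {x : 𝕂} (hx : ‖x‖ < 1) :
    (a - b - 1) * (x * (1 - x) * deriv (₂F₁ a b c) x - b * x * ₂F₁ a b c x) =
      b * (a - c) * (₂F₁ (a - 1) (b + 1) c x - ₂F₁ a b c x) := by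
  set A := ordinaryHypergeometricCoefficient a b c
  set B := ordinaryHypergeometricCoefficient (a - 1) (b + 1) c
  set F := ₂F₁ a b c x
  set D := deriv (₂F₁ a b c) x
  have hF : HasSum (fun n => x ^ n * A n) F := hasSum_ordinaryHypergeometric hc hx
  have hD : HasSum (fun n => x ^ n * ((n + 1) * A (n + 1))) D :=
    hasSum_deriv_ordinaryHypergeometric hc hx
  have hG : HasSum (fun n => x ^ n * B n) (₂F₁ (a - 1) (b + 1) c x) :=
    hasSum_ordinaryHypergeometric hc hx
  have hxD : HasSum (fun n => x ^ n * (n * A n)) (x * D) := by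
    simpa using HasSum.zero_add (f := fun n => x ^ n * (n * A n))
      ((hD.mul_left x).congr_fun fun n => by push_cast; ring)
  have hAB (n : ℕ) : (a - b - 1) * ((n + 1) * A (n + 1) - (b + n) * A n) =
      b * (a - c) * (B (n + 1) - A (n + 1)) :=
    ordinaryHypergeometricCoefficient_contiguous a b n
      fun h => hc n (eq_neg_of_add_eq_zero_left h)
  -- both sides vanish at `x = 0`, so it suffices to match the coefficients of `x ^ (n + 1)`
  have hT : HasSum (fun n => x ^ (n + 1) * (b * (a - c) * (B (n + 1) - A (n + 1))))
      ((a - b - 1) * x * (D - (x * D + b * F))) :=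
    ((hD.sub (hxD.add (hF.mul_left b))).mul_left ((a - b - 1) * x)).congr_fun fun n => by
      rw [← hAB]
      ring
  have hBA : B 0 = A 0 := by simp [A, B, ordinaryHypergeometricCoefficient]
  have hGF := HasSum.zero_add (f := fun n => x ^ n * (b * (a - c) * (B n - A n))) hT
  simp only [hBA, sub_self, mul_zero, zero_add] at hGF
  calc (a - b - 1) * (x * (1 - x) * D - b * x * F)
      = (a - b - 1) * x * (D - (x * D + b * F)) := by ring
    _ = b * (a - c) * (₂F₁ (a - 1) (b + 1) c x - F) :=
      hGF.unique (((hG.sub hF).mul_left (b * (a - c))).congr_fun fun n => by ring)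

end RCLike

theorem gauss2F1_eq_ordinaryHypergeometric (a b c : ℂ) :
    gauss2F1 a b c = ordinaryHypergeometric a b c := by
  rw [ordinaryHypergeometric_eq_tsum]
  ext x
  refine tsum_congr fun n => ?_
  rw [smul_eq_mul, div_eq_mul_inv, mul_inv]
  ring

/-- Shift operator relation (3.12) of the paper, with δ = (1/2)(a−c+1/2)(a−1/2):
x(1−x)∂ₓF(a+u,a−u;c;x) + ((1/2−a)x + c/2 − 1/2 + (u−1/2)(x−1/2) + δ/(u−1/2))F(a+u,a−u;c;x)
 = ((a−u)(a−c+u)/(2(u−1/2)))F(a+u−1,a−u+1;c;x). -/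
theorem stmt_16 (a c u : ℂ) (hc : ∀ n : ℕ, c ≠ -(n : ℂ)) (hu : u ≠ 1/2)
    (δ : ℂ) (hδ : δ = (1/2) * (a - c + 1/2) * (a - 1/2)) :
    ∀ x : ℂ, ‖x‖ < 1 →
      x * (1 - x) * deriv (fun y => gauss2F1 (a + u) (a - u) c y) x
        + ((1/2 - a) * x + (1/2) * c - 1/2 + (u - 1/2) * (x - 1/2) + δ / (u - 1/2))
          * gauss2F1 (a + u) (a - u) c x
      = ((a - u) * (a - c + u) / (2 * (u - 1/2))) * gauss2F1 (a + u - 1) (a - u + 1) c x := by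
  intro x hx
  have hu' : u - 1/2 ≠ 0 := sub_ne_zero.mpr hu
  have hE : (1/2 - a) * x + (1/2) * c - 1/2 + (u - 1/2) * (x - 1/2) + δ / (u - 1/2) =
      (a - u) * (a - c + u) / (2 * (u - 1/2)) - (a - u) * x := by
    rw [eq_sub_iff_add_eq, eq_div_iff (mul_ne_zero two_ne_zero hu')]
    linear_combination 2 * div_mul_cancel₀ δ hu' + 2 * hδ
  have hcontig := ordinaryHypergeometric_contiguous (a := a + u) (b := a - u) hc hx
  have hrel : x * (1 - x) * deriv (₂F₁ (a + u) (a - u) c) x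
        - (a - u) * x * ₂F₁ (a + u) (a - u) c x
      = (a - u) * (a - c + u) / (2 * (u - 1/2)) *
          (₂F₁ (a + u - 1) (a - u + 1) c x - ₂F₁ (a + u) (a - u) c x) := by
    rw [div_mul_eq_mul_div, eq_div_iff (mul_ne_zero two_ne_zero hu')]
    linear_combination hcontig
  rw [hE, show (fun y => gauss2F1 (a + u) (a - u) c y) = gauss2F1 (a + u) (a - u) c from rfl,
    gauss2F1_eq_ordinaryHypergeometric, gauss2F1_eq_ordinaryHypergeometric]
  linear_combination hrel
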